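/- Let Σ be symmetric positive definite with largest eigenvalue λ_max. Then the maximum of φ(u) = −½ uᵀ Σ⁻¹ u + (p/2) log(4 uᵀu) over R^p \ {0} is attained at u = ±√(p λ_max) e, where e is any unit eigenvector of Σ corresponding to λ_max, and at no point outside the eigenspace of λ_max. -/

import Mathlib

/-!
Since every eigenvalue of `Σ⁻¹` is at least `λ_max⁻¹`, the matrix `Σ⁻¹ - λ_max⁻¹ • 1` is positive
semidefinite, so `uᵀΣ⁻¹u ≥ λ_max⁻¹ ‖u‖²` with equality exactly on the `λ_max`-eigenspace.
Hence `φ(u) ≤ -‖u‖²/(2λ_max) + (p/2) log(4‖u‖²)`, and by `log x ≤ x - 1` the right-hand side is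
at most its value at `‖u‖² = pλ_max`, which `±√(pλ_max) e` attain. Off the eigenspace the first
inequality is strict, so no maximizer lies there.
-/

open Matrix

section Spectral

variable {n : Type*} [Fintype n]

theorem Matrix.PosDef.eigenvalue_pos {S : Matrix n n ℝ} (hS : S.PosDef) {μ : ℝ} {v : n → ℝ}
    (hv : v ≠ 0) (h : S *ᵥ v = μ • v) : 0 < μ := by
  have hquad : 0 < μ * (v ⬝ᵥ v) := by
    simpa [h, dotProduct_smul] using hS.dotProduct_mulVec_pos hv
  have hnorm : 0 < v ⬝ᵥ v := by simpa using dotProduct_star_self_pos_iff.mpr hv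
  exact pos_of_mul_pos_left hquad hnorm.le

variable [DecidableEq n]

theorem Matrix.inv_mulVec_eq_inv_smul {A : Matrix n n ℝ} (hA : IsUnit A.det) {c : ℝ} {v : n → ℝ}
    (h : A *ᵥ v = c • v) : A⁻¹ *ᵥ v = c⁻¹ • v := by
  have hv : v = c • A⁻¹ *ᵥ v := by
    rw [← mulVec_smul, ← h, mulVec_mulVec, nonsing_inv_mul A hA, one_mulVec]
  rcases eq_or_ne c 0 with rfl | hc
  · rw [zero_smul] at hv
    simp [hv]
  · rw [hv, smul_smul, inv_mul_cancel₀ hc, one_smul, ← hv]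

theorem Matrix.mulVec_eq_inv_smul_of_inv_mulVec_eq_smul {A : Matrix n n ℝ} (hA : IsUnit A.det)
    {c : ℝ} {v : n → ℝ} (h : A⁻¹ *ᵥ v = c • v) : A *ᵥ v = c⁻¹ • v := by
  simpa [nonsing_inv_nonsing_inv A hA] using
    inv_mulVec_eq_inv_smul (isUnit_nonsing_inv_det A hA) h

theorem Matrix.PosDef.inv_le_of_inv_mulVec_eq_smul {S : Matrix n n ℝ} (hS : S.PosDef) {lmax : ℝ}
    (htop : ∀ (μ : ℝ) (v : n → ℝ), v ≠ 0 → S *ᵥ v = μ • v → μ ≤ lmax)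
    (μ : ℝ) (v : n → ℝ) (hv : v ≠ 0) (h : S⁻¹ *ᵥ v = μ • v) : lmax⁻¹ ≤ μ := by
  have hSv := mulVec_eq_inv_smul_of_inv_mulVec_eq_smul hS.det_pos.ne'.isUnit h
  exact inv_le_of_inv_le₀ (hS.inv.eigenvalue_pos hv h) (htop _ v hv hSv)

section LowerBound

variable {A : Matrix n n ℝ} (hA : A.IsHermitian) {m : ℝ}
  (hm : ∀ (μ : ℝ) (v : n → ℝ), v ≠ 0 → A *ᵥ v = μ • v → m ≤ μ)
include hA hm

theorem Matrix.IsHermitian.posSemidef_sub_smul_one : (A - m • 1).PosSemidef := by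
  have hB : (A - m • 1).IsHermitian := hA.sub (isHermitian_one.smul (IsSelfAdjoint.all m))
  refine hB.posSemidef_iff_eigenvalues_nonneg.mpr fun i => ?_
  have hw := hB.mulVec_eigenvectorBasis i
  have hne : ⇑(hB.eigenvectorBasis i) ≠ 0 := fun h =>
    hB.eigenvectorBasis.orthonormal.ne_zero i (by ext j; exact congrFun h j)
  rw [sub_mulVec, smul_mulVec, one_mulVec, sub_eq_iff_eq_add, ← add_smul] at hw
  simpa using hm _ _ hne hw

theorem Matrix.IsHermitian.mul_dotProduct_self_le (v : n → ℝ) :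
    m * (v ⬝ᵥ v) ≤ v ⬝ᵥ (A *ᵥ v) := by
  have := (hA.posSemidef_sub_smul_one hm).dotProduct_mulVec_nonneg v
  simp only [star_trivial, sub_mulVec, smul_mulVec, one_mulVec, dotProduct_sub,
    dotProduct_smul, smul_eq_mul] at this
  linarith

theorem Matrix.IsHermitian.mul_dotProduct_self_lt {v : n → ℝ} (hv : A *ᵥ v ≠ m • v) :
    m * (v ⬝ᵥ v) < v ⬝ᵥ (A *ᵥ v) := by
  refine (hA.mul_dotProduct_self_le hm v).lt_of_ne fun heq => hv ?_
  simpa only [star_trivial, sub_mulVec, smul_mulVec, one_mulVec, dotProduct_sub,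
    dotProduct_smul, smul_eq_mul, ← heq, sub_self, sub_eq_zero, forall_const] using
    ((hA.posSemidef_sub_smul_one hm).dotProduct_mulVec_zero_iff v).mp

end LowerBound

end Spectral

theorem Real.mul_log_sub_div_le {a k r : ℝ} (ha : 0 < a) (hk : 0 < k) (hr : 0 < r) :
    k * Real.log r - r / a ≤ k * Real.log (k * a) - k := by
  have hlog : Real.log r - Real.log (k * a) ≤ r / (k * a) - 1 := by
    rw [← Real.log_div hr.ne' (by positivity)]
    exact Real.log_le_sub_one_of_pos (by positivity)
  have : k * (r / (k * a)) = r / a := by field_simp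
  nlinarith

section Objective

variable {n : Type*} [Fintype n] [DecidableEq n]

noncomputable def anisotropicObjective (k : ℝ) (S : Matrix n n ℝ) (w : n → ℝ) : ℝ :=
  -(1/2 : ℝ) * (w ⬝ᵥ (S⁻¹ *ᵥ w)) + (k / 2) * Real.log (4 * (w ⬝ᵥ w))

theorem anisotropicObjective_add_half_gap_le {k lmax : ℝ} (hk : 0 < k) (hl : 0 < lmax)
    (S : Matrix n n ℝ) {v : n → ℝ} (hv : v ≠ 0) :
    anisotropicObjective k S v + (v ⬝ᵥ (S⁻¹ *ᵥ v) - lmax⁻¹ * (v ⬝ᵥ v)) / 2 ≤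
      -(k / 2) + k / 2 * Real.log (4 * (k * lmax)) := by
  have hr : 0 < v ⬝ᵥ v := by simpa using dotProduct_star_self_pos_iff.mpr hv
  have hscalar := Real.mul_log_sub_div_le hl hk hr
  rw [div_eq_inv_mul] at hscalar
  rw [anisotropicObjective, Real.log_mul four_ne_zero hr.ne',
    Real.log_mul four_ne_zero (by positivity)]
  linarith

theorem anisotropicObjective_smul_eigenvector {k lmax c : ℝ} {S : Matrix n n ℝ}
    (hS : IsUnit S.det) (hl : lmax ≠ 0) {e : n → ℝ} (he_unit : e ⬝ᵥ e = 1)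
    (he_ev : S *ᵥ e = lmax • e) (hc : c ^ 2 = k * lmax) :
    anisotropicObjective k S (c • e) = -(k / 2) + k / 2 * Real.log (4 * (k * lmax)) := by
  rw [anisotropicObjective, mulVec_smul, inv_mulVec_eq_inv_smul hS he_ev]
  simp only [smul_dotProduct, dotProduct_smul, he_unit, smul_eq_mul, mul_one]
  have hcc : c * c = k * lmax := by rw [← sq, hc]
  rw [mul_left_comm c lmax⁻¹ c, hcc]
  field_simp

end Objective

theorem med_anisotropic_maximizers_general (p : ℕ) (hp : 0 < p)
    (S : Matrix (Fin p) (Fin p) ℝ) (hS : S.PosDef)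
    (φ : (Fin p → ℝ) → ℝ)
    (hφ : ∀ w, φ w = -(1/2 : ℝ) * (w ⬝ᵥ (S⁻¹ *ᵥ w)) + ((p : ℝ)/2) * Real.log (4 * (w ⬝ᵥ w)))
    (lmax : ℝ)
    (hlmax_top : ∀ (μ : ℝ) (v : Fin p → ℝ), v ≠ 0 → S *ᵥ v = μ • v → μ ≤ lmax)
    (e : Fin p → ℝ) (he_unit : e ⬝ᵥ e = 1) (he_ev : S *ᵥ e = lmax • e) :
    (∀ v : Fin p → ℝ, v ≠ 0 → φ v ≤ φ (Real.sqrt ((p : ℝ) * lmax) • e)) ∧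
    (∀ v : Fin p → ℝ, v ≠ 0 → φ v ≤ φ (-(Real.sqrt ((p : ℝ) * lmax)) • e)) ∧
    (∀ u : Fin p → ℝ, u ≠ 0 → (∀ v : Fin p → ℝ, v ≠ 0 → φ v ≤ φ u) →
      S *ᵥ u = lmax • u) := by
  obtain rfl : φ = anisotropicObjective p S := funext hφ
  have he : e ≠ 0 := by rintro rfl; simp at he_unit
  have hl : 0 < lmax := hS.eigenvalue_pos he he_ev
  have hk : (0 : ℝ) < p := by exact_mod_cast hp
  have hSinv_ge := hS.inv_le_of_inv_mulVec_eq_smul hlmax_top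
  have hsq : Real.sqrt (p * lmax) ^ 2 = p * lmax := Real.sq_sqrt (by positivity)
  have hattain : ∀ c : ℝ, c ^ 2 = p * lmax →
      anisotropicObjective p S (c • e) = -(p / 2) + p / 2 * Real.log (4 * (p * lmax)) :=
    fun c hc => anisotropicObjective_smul_eigenvector hS.det_pos.ne'.isUnit hl.ne' he_unit he_ev hc
  have hle : ∀ v : Fin p → ℝ, v ≠ 0 →
      anisotropicObjective p S v ≤ -(p / 2) + p / 2 * Real.log (4 * (p * lmax)) := fun v hv => by
    linarith [anisotropicObjective_add_half_gap_le hk hl S hv,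
      hS.inv.isHermitian.mul_dotProduct_self_le hSinv_ge v]
  refine ⟨fun v hv => hattain _ hsq ▸ hle v hv,
    fun v hv => hattain _ (by rw [neg_sq, hsq]) ▸ hle v hv, fun u hu hmax => ?_⟩
  by_contra hne
  have hgap := hS.inv.isHermitian.mul_dotProduct_self_lt hSinv_ge (v := u) fun h => hne <| by
    simpa using mulVec_eq_inv_smul_of_inv_mulVec_eq_smul hS.det_pos.ne'.isUnit h
  have hmax_attained :=
    hmax (Real.sqrt (p * lmax) • e) (smul_ne_zero (Real.sqrt_pos.mpr (by positivity)).ne' he)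
  linarith [anisotropicObjective_add_half_gap_le hk hl S hu, hattain _ hsq]

/-- For symmetric positive definite `Σ` with largest eigenvalue `λmax`, the maximum of
`φ(u) = -½ uᵀΣ⁻¹u + (p/2) log(4 uᵀu)` over `u ≠ 0` is attained at `±√(p λmax) e` for any
unit eigenvector `e` of `λmax`, and any maximizer lies in the eigenspace of `λmax`. -/
theorem med_anisotropic_maximizers (p : ℕ) (hp : 0 < p)
    (S : Matrix (Fin p) (Fin p) ℝ) (hS : S.PosDef) (hSym : S.IsSymm)
    (φ : (Fin p → ℝ) → ℝ)
    (hφ : ∀ w, φ w = -(1/2 : ℝ) * (w ⬝ᵥ (S⁻¹ *ᵥ w)) + ((p : ℝ)/2) * Real.log (4 * (w ⬝ᵥ w)))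
    (lmax : ℝ)
    (hlmax_ev : ∃ v : Fin p → ℝ, v ≠ 0 ∧ S *ᵥ v = lmax • v)
    (hlmax_top : ∀ (μ : ℝ) (v : Fin p → ℝ), v ≠ 0 → S *ᵥ v = μ • v → μ ≤ lmax)
    (e : Fin p → ℝ) (he_unit : e ⬝ᵥ e = 1) (he_ev : S *ᵥ e = lmax • e) :
    (∀ v : Fin p → ℝ, v ≠ 0 → φ v ≤ φ (Real.sqrt ((p : ℝ) * lmax) • e)) ∧
    (∀ v : Fin p → ℝ, v ≠ 0 → φ v ≤ φ (-(Real.sqrt ((p : ℝ) * lmax)) • e)) ∧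
    (∀ u : Fin p → ℝ, u ≠ 0 → (∀ v : Fin p → ℝ, v ≠ 0 → φ v ≤ φ u) →
      S *ᵥ u = lmax • u) :=
  med_anisotropic_maximizers_general p hp S hS φ hφ lmax hlmax_top e he_unit he_ev
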